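/- arXiv:math/0502075 — 6 statements merged into one kernel-verified Lean document; each statement's English description precedes it below -/
import Mathlib

section
/- In any pregroupoid, the equation x₆(x₃x₄⁻¹x₅)⁻¹x₂ = x₆x₅⁻¹(x₄x₃⁻¹x₂) holds whenever the book-keeping conditions making both sides defined hold, namely β(x₄)=β(x₃), α(x₄)=α(x₅), β(x₅)=β(x₆), α(x₃)=α(x₂). -/
namespace Kock

/-- A pregroupoid on `A`, `B`: an inhabited type `X` with surjections `α`, `β` and a
partial ternary operation `op y x z` (meaning `y x⁻¹ z`), defined whenever
`β x = β y` and `α x = α z`; partiality is encoded by proof arguments, and the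
axioms are quantified over all proofs of the book-keeping conditions. -/
structure Pregroupoid (A B X : Type*) : Type _ where
  α : X → A
  β : X → B
  nonempty : Nonempty X
  α_surj : Function.Surjective α
  β_surj : Function.Surjective β
  op : (y x z : X) → β x = β y → α x = α z → X
  α_op : ∀ (y x z : X) (h1 : β x = β y) (h2 : α x = α z), α (op y x z h1 h2) = α y
  β_op : ∀ (y x z : X) (h1 : β x = β y) (h2 : α x = α z), β (op y x z h1 h2) = β z
  U1 : ∀ (x z : X) (h1 : β x = β x) (h2 : α x = α z), op x x z h1 h2 = z
  U2 : ∀ (y x : X) (h1 : β x = β y) (h2 : α x = α x), op y x x h1 h2 = y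
  G1 : ∀ (v y x z : X) (h1 : β x = β y) (h2 : α x = α z) (h3 : β y = β v)
      (h4 : α y = α (op y x z h1 h2)) (h5 : β x = β v),
      op v y (op y x z h1 h2) h3 h4 = op v x z h5 h2
  G2 : ∀ (y x z w : X) (h1 : β x = β y) (h2 : α x = α z)
      (h3 : β z = β (op y x z h1 h2)) (h4 : α z = α w) (h5 : α x = α w),
      op (op y x z h1 h2) z w h3 h4 = op y x w h1 h5


theorem op_congr_left {A B X : Type*} (P : Pregroupoid A B X) {y y' x z : X}
    (hy : y = y') (h1 : P.β x = P.β y) (h2 : P.α x = P.α z) (h1' : P.β x = P.β y') :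
    P.op y x z h1 h2 = P.op y' x z h1' h2 := by subst hy; rfl

theorem op_congr_right {A B X : Type*} (P : Pregroupoid A B X) {y x z z' : X}
    (hz : z = z') (h1 : P.β x = P.β y) (h2 : P.α x = P.α z) (h2' : P.α x = P.α z') :
    P.op y x z h1 h2 = P.op y x z' h1 h2' := by subst hz; rfl

/-- In any pregroupoid, `x₆(x₃x₄⁻¹x₅)⁻¹x₂ = x₆x₅⁻¹(x₄x₃⁻¹x₂)`,
whenever the book-keeping conditions `β x₄ = β x₃`, `α x₄ = α x₅`,
`β x₅ = β x₆`, `α x₃ = α x₂` hold. -/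
theorem pregroupoid_three_quad {A B X : Type*} (P : Pregroupoid A B X)
    (x2 x3 x4 x5 x6 : X)
    (h43 : P.β x4 = P.β x3) (h45 : P.α x4 = P.α x5)
    (h56 : P.β x5 = P.β x6) (h32 : P.α x3 = P.α x2)
    (hb : P.β (P.op x3 x4 x5 h43 h45) = P.β x6)
    (hc : P.α (P.op x3 x4 x5 h43 h45) = P.α x2)
    (ha : P.α x5 = P.α (P.op x4 x3 x2 h43.symm h32)) :
    P.op x6 (P.op x3 x4 x5 h43 h45) x2 hb hc
      = P.op x6 x5 (P.op x4 x3 x2 h43.symm h32) h56 ha := by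
  set m := P.op x3 x4 x5 h43 h45 with hm
  set n := P.op x4 x3 x2 h43.symm h32 with hn
  have hβm : P.β x5 = P.β m := (P.β_op _ _ _ _ _).symm
  have hc3 : P.α m = P.α x3 := P.α_op _ _ _ _ _
  have h1 : P.op m x5 x4 hβm h45.symm = x3 :=
    (P.G2 x3 x4 x5 x4 h43 h45 hβm h45.symm rfl).trans (P.U2 x3 x4 h43 rfl)
  have hb3 : P.β x3 = P.β (P.op x6 m x3 hb hc3) := (P.β_op _ _ _ _ _).symm
  have hc4 : P.α m = P.α (P.op m x5 x4 hβm h45.symm) := hc3.trans (congrArg P.α h1.symm)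
  have h2 : P.op x6 m x3 hb hc3 = P.op x6 x5 x4 h56 h45.symm :=
    (op_congr_right P h1.symm hb hc3 hc4).trans
      (P.G1 x6 m x5 x4 hβm h45.symm hb hc4 h56)
  have hβq : P.β x4 = P.β (P.op x6 x5 x4 h56 h45.symm) := (P.β_op _ _ _ _ _).symm
  have hb3' : P.β x3 = P.β (P.op x6 x5 x4 h56 h45.symm) := h43.symm.trans hβq
  have ha4 : P.α x4 = P.α n := h45.trans ha
  calc P.op x6 m x2 hb hc
      = P.op (P.op x6 m x3 hb hc3) x3 x2 hb3 h32 :=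
        (P.G2 x6 m x3 x2 hb hc3 hb3 h32 hc).symm
    _ = P.op (P.op x6 x5 x4 h56 h45.symm) x3 x2 hb3' h32 :=
        op_congr_left P h2 hb3 h32 hb3'
    _ = P.op (P.op x6 x5 x4 h56 h45.symm) x4 n hβq ha4 :=
        (P.G1 (P.op x6 x5 x4 h56 h45.symm) x4 x3 x2 h43.symm h32 hβq ha4 hb3').symm
    _ = P.op x6 x5 n h56 ha := P.G2 x6 x5 x4 n h56 h45.symm hβq ha4 ha

end Kock
end

section
/- In any pregroupoid, the fraction identity (x₁x₂⁻¹x₃)x₄⁻¹ = x₁(x₄x₃⁻¹x₂)⁻¹ holds in XX⁻¹: i.e. the horizontal pairs (x₄, x₁x₂⁻¹x₃) and (x₄x₃⁻¹x₂, x₁) are ≅ₕ-equivalent, whenever the book-keeping conditions β(x₁)=β(x₂), α(x₂)=α(x₃), β(x₃)=β(x₄) hold. Equivalently, x₁ = (x₁x₂⁻¹x₃)x₄⁻¹(x₄x₃⁻¹x₂). -/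
namespace Kock

/-- Horizontal pairs: pairs `(x, y)` with `β x = β y`. -/
def HPair {A B X : Type*} (P : Pregroupoid A B X) : Type _ :=
  {p : X × X // P.β p.1 = P.β p.2}

/-- The relation `(x, y) ≅ₕ (z, u)` iff `α x = α z` and `u = yx⁻¹z`;
its classes `yx⁻¹` form `XX⁻¹`. -/
def hRel {A B X : Type*} (P : Pregroupoid A B X) (p q : HPair P) : Prop :=
  ∃ h : P.α p.val.1 = P.α q.val.1,
    q.val.2 = P.op p.val.2 p.val.1 q.val.1 p.prop h

namespace Pregroupoid

variable {A B X : Type*} (P : Pregroupoid A B X)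

theorem op_op_cancel_right (y x z : X) (h1 : P.β x = P.β y) (h2 : P.α x = P.α z)
    (h3 : P.β z = P.β (P.op y x z h1 h2)) (h4 : P.α z = P.α x) :
    P.op (P.op y x z h1 h2) z x h3 h4 = y := by
  rw [P.G2 y x z x h1 h2 h3 h4 rfl, P.U2]

end Pregroupoid

/-- The fraction identity `(x₁x₂⁻¹x₃)x₄⁻¹ = x₁(x₄x₃⁻¹x₂)⁻¹`
holds in `XX⁻¹`: the horizontal pairs `(x₄, x₁x₂⁻¹x₃)` and `(x₄x₃⁻¹x₂, x₁)`
are `≅ₕ`-equivalent; equivalently, `x₁ = (x₁x₂⁻¹x₃)x₄⁻¹(x₄x₃⁻¹x₂)`. -/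
theorem fraction_identity_right {A B X : Type*} (P : Pregroupoid A B X)
    (x1 x2 x3 x4 : X)
    (h1 : P.β x1 = P.β x2) (h2 : P.α x2 = P.α x3) (h3 : P.β x3 = P.β x4)
    (ha : P.β x4 = P.β (P.op x1 x2 x3 h1.symm h2))
    (hb : P.α x4 = P.α (P.op x4 x3 x2 h3 h2.symm))
    (hc : P.β (P.op x4 x3 x2 h3 h2.symm) = P.β x1) :
    hRel P ⟨(x4, P.op x1 x2 x3 h1.symm h2), ha⟩
        ⟨(P.op x4 x3 x2 h3 h2.symm, x1), hc⟩ ∧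
      x1 = P.op (P.op x1 x2 x3 h1.symm h2) x4 (P.op x4 x3 x2 h3 h2.symm)
        ha hb := by
  -- `G1` cancels `x₄⁻¹x₄`, leaving `(x₁x₂⁻¹x₃)x₃⁻¹x₂`.
  have key : P.op (P.op x1 x2 x3 h1.symm h2) x4 (P.op x4 x3 x2 h3 h2.symm) ha hb = x1 := by
    rw [P.G1 _ x4 x3 x2 h3 h2.symm ha hb (h3.trans ha), P.op_op_cancel_right]
  exact ⟨⟨hb, key.symm⟩, key.symm⟩

end Kock
end

section
/- In any pregroupoid, the fraction identity (x₄x₃⁻¹x₂)⁻¹x₅ = x₂⁻¹(x₃x₄⁻¹x₅) holds in X⁻¹X: i.e. the vertical pairs (x₄x₃⁻¹x₂, x₅) and (x₂, x₃x₄⁻¹x₅) are ≅ᵥ-equivalent, whenever the relevant book-keeping conditions hold. Equivalently, x₃x₄⁻¹x₅ = x₂(x₄x₃⁻¹x₂)⁻¹x₅. -/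
namespace Kock

/-- Vertical pairs: pairs `(x, z)` with `α x = α z`. -/
def VPair {A B X : Type*} (P : Pregroupoid A B X) : Type _ :=
  {p : X × X // P.α p.1 = P.α p.2}

/-- The relation `(x, z) ≅ᵥ (y, u)` iff `β x = β y` and `u = yx⁻¹z`;
its classes `x⁻¹z` form `X⁻¹X`. -/
def vRel {A B X : Type*} (P : Pregroupoid A B X) (p q : VPair P) : Prop :=
  ∃ h : P.β p.val.1 = P.β q.val.1,
    q.val.2 = P.op q.val.1 p.val.1 p.val.2 h p.prop

namespace Pregroupoid

variable {A B X : Type*} (P : Pregroupoid A B X)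

theorem op_op_cancel_left {x y z : X} (hyx : P.β y = P.β x) (hyz : P.α y = P.α z) :
    P.op y x (P.op x y z hyx hyz) hyx.symm (P.α_op x y z hyx hyz).symm = z := by
  rw [P.G1 y x y z hyx hyz hyx.symm _ rfl, P.U1]

/-- In group notation `y x⁻¹ w = z (x y⁻¹ z)⁻¹ w`. -/
theorem op_eq_op_op {x y z w : X} (hyx : P.β y = P.β x) (hyz : P.α y = P.α z)
    (hxw : P.α x = P.α w) :
    P.op y x w hyx.symm hxw
      = P.op z (P.op x y z hyx hyz) w (P.β_op x y z hyx hyz)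
          ((P.α_op x y z hyx hyz).trans hxw) := by
  have hp := P.α_op x y z hyx hyz
  rw [← P.G2 y x (P.op x y z hyx hyz) w hyx.symm hp.symm
    (by rw [op_op_cancel_left]; exact P.β_op x y z hyx hyz) (hp.trans hxw) hxw]
  simp only [op_op_cancel_left]

end Pregroupoid

/-- The fraction identity `(x₄x₃⁻¹x₂)⁻¹x₅ = x₂⁻¹(x₃x₄⁻¹x₅)`
holds in `X⁻¹X`: the vertical pairs `(x₄x₃⁻¹x₂, x₅)` and `(x₂, x₃x₄⁻¹x₅)`
are `≅ᵥ`-equivalent; equivalently, `x₃x₄⁻¹x₅ = x₂(x₄x₃⁻¹x₂)⁻¹x₅`. -/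
theorem fraction_identity_left {A B X : Type*} (P : Pregroupoid A B X)
    (x2 x3 x4 x5 : X)
    (h34 : P.β x3 = P.β x4) (h32 : P.α x3 = P.α x2) (h45 : P.α x4 = P.α x5)
    (hv : P.α (P.op x4 x3 x2 h34 h32) = P.α x5)
    (hb : P.β (P.op x4 x3 x2 h34 h32) = P.β x2)
    (hq : P.α x2 = P.α (P.op x3 x4 x5 h34.symm h45)) :
    vRel P ⟨(P.op x4 x3 x2 h34 h32, x5), hv⟩
        ⟨(x2, P.op x3 x4 x5 h34.symm h45), hq⟩ ∧
      P.op x3 x4 x5 h34.symm h45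
        = P.op x2 (P.op x4 x3 x2 h34 h32) x5 hb hv := by
  have key := P.op_eq_op_op h34 h32 h45
  exact ⟨⟨hb, key⟩, key⟩

end Kock
end

section
/- For any pregroupoid X on A, B, the enveloping groupoid X⁺ with objects A ⊔ B, whose hom-sets are X⁺(A,A) = XX⁻¹, X⁺(B,B) = X⁻¹X, X⁺(A,B) = X, X⁺(B,A) = X⁻¹ (a formal copy of X), with composition defined by the multiplication table (e.g. x₁x₂⁻¹ ∘ x₃x₄⁻¹ := (x₁x₂⁻¹x₃)x₄⁻¹, x₁x₂⁻¹ ∘ x₃ := x₁x₂⁻¹x₃, x₁ ∘ x₂⁻¹ := x₁x₂⁻¹, x₂⁻¹ ∘ x₃ := x₂⁻¹x₃, etc.), is a well-defined groupoid: composition is well defined on equivalence classes, associative, has identities (xx⁻¹ at α(x) and x⁻¹x at β(x)), and every arrow is invertible. -/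
namespace Kock

/-- `XX⁻¹`: fractions `yx⁻¹`, the classes of horizontal pairs. -/
def XXinv {A B X : Type*} (P : Pregroupoid A B X) : Type _ := Quot (hRel P)

/-- `X⁻¹X`: fractions `x⁻¹z`, the classes of vertical pairs. -/
def XinvX {A B X : Type*} (P : Pregroupoid A B X) : Type _ := Quot (vRel P)

/-- The arrows of the enveloping groupoid `X⁺`: the four disjoint pieces
`X⁺(A,A) = XX⁻¹`, `X⁺(B,B) = X⁻¹X`, `X⁺(A,B) = X` and `X⁺(B,A) = X⁻¹`
(a formal copy of `X`). -/
inductive Arr {A B X : Type*} (P : Pregroupoid A B X) : Type _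
  | aa : XXinv P → Arr P
  | bb : XinvX P → Arr P
  | ab : X → Arr P
  | ba : X → Arr P

/-- The fraction `yx⁻¹`, as an arrow of `X⁺`. -/
def mkAA {A B X : Type*} (P : Pregroupoid A B X) (y x : X)
    (h : P.β x = P.β y) : Arr P :=
  .aa (Quot.mk _ ⟨(x, y), h⟩)

/-- The fraction `x⁻¹z`, as an arrow of `X⁺`. -/
def mkBB {A B X : Type*} (P : Pregroupoid A B X) (x z : X)
    (h : P.α x = P.α z) : Arr P :=
  .bb (Quot.mk _ ⟨(x, z), h⟩)

/-- `x ∈ X = X⁺(A,B)`, as an arrow of `X⁺`. -/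
def mkAB {A B X : Type*} (P : Pregroupoid A B X) (x : X) : Arr P := .ab x

/-- `x⁻¹ ∈ X⁻¹ = X⁺(B,A)`, as an arrow of `X⁺`. -/
def mkBA {A B X : Type*} (P : Pregroupoid A B X) (x : X) : Arr P := .ba x

/-- The domain book-keeping map of `X⁺`, with values in `A ⊔ B`. -/
def d0 {A B X : Type*} (P : Pregroupoid A B X) : Arr P → A ⊕ B
  | .aa c => Sum.inl (Quot.lift (fun p => P.α p.val.2)
      (fun p q => by rintro ⟨h, hq⟩; exact ((congrArg P.α hq).trans (P.α_op _ _ _ _ _)).symm) c)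
  | .bb c => Sum.inr (Quot.lift (fun p => P.β p.val.1)
      (fun p q => by rintro ⟨h, hq⟩; exact h) c)
  | .ab x => Sum.inl (P.α x)
  | .ba x => Sum.inr (P.β x)

/-- The codomain book-keeping map of `X⁺`, with values in `A ⊔ B`. -/
def d1 {A B X : Type*} (P : Pregroupoid A B X) : Arr P → A ⊕ B
  | .aa c => Sum.inl (Quot.lift (fun p => P.α p.val.1)
      (fun p q => by rintro ⟨h, hq⟩; exact h) c)
  | .bb c => Sum.inr (Quot.lift (fun p => P.β p.val.2)
      (fun p q => by rintro ⟨h, hq⟩; exact ((congrArg P.β hq).trans (P.β_op _ _ _ _ _)).symm) c)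
  | .ab x => Sum.inr (P.β x)
  | .ba x => Sum.inl (P.α x)

/-- The hom-sets of the enveloping groupoid `X⁺`, over the object set `A ⊔ B`. -/
def EnvHom {A B X : Type*} (P : Pregroupoid A B X) (a b : A ⊕ B) : Type _ :=
  {f : Arr P // d0 P f = a ∧ d1 P f = b}

/-- A groupoid structure on a family of hom-sets: identities, composition
(written from left to right), inverses, and the groupoid laws. -/
structure GroupoidStructure {Obj : Type*} (Hom : Obj → Obj → Type*) where
  ident : ∀ a, Hom a a
  comp : ∀ {a b c}, Hom a b → Hom b c → Hom a c
  inv : ∀ {a b}, Hom a b → Hom b a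
  id_comp : ∀ {a b} (f : Hom a b), comp (ident a) f = f
  comp_id : ∀ {a b} (f : Hom a b), comp f (ident b) = f
  assoc : ∀ {a b c d} (f : Hom a b) (g : Hom b c) (h : Hom c d),
    comp (comp f g) h = comp f (comp g h)
  inv_comp : ∀ {a b} (f : Hom a b), comp (inv f) f = ident b
  comp_inv : ∀ {a b} (f : Hom a b), comp f (inv f) = ident a

/-- The multiplication table of the enveloping groupoid `X⁺`, together with the
description of its identities: composition (left to right) of the four kinds of
arrows is given by `x₁x₂⁻¹ ∘ x₃x₄⁻¹ = (x₁x₂⁻¹x₃)x₄⁻¹`, `x₁x₂⁻¹ ∘ x₃ = x₁x₂⁻¹x₃`,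
`x₁ ∘ x₂⁻¹ = x₁x₂⁻¹`, `x₁ ∘ x₂⁻¹x₃ = x₁x₂⁻¹x₃`, `x₃⁻¹ ∘ x₂x₁⁻¹ = (x₁x₂⁻¹x₃)⁻¹`,
`x₂⁻¹ ∘ x₃ = x₂⁻¹x₃`, `x₃⁻¹x₂ ∘ x₁⁻¹ = (x₁x₂⁻¹x₃)⁻¹`,
`x₂⁻¹x₃ ∘ x₄⁻¹x₅ = x₂⁻¹(x₃x₄⁻¹x₅)`, and the identity at `α x` is `xx⁻¹`,
the identity at `β x` is `x⁻¹x`. -/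
def TableSpec {A B X : Type*} (P : Pregroupoid A B X)
    (str : GroupoidStructure (EnvHom P)) : Prop :=
  (∀ (a b c : A ⊕ B) (f : EnvHom P a b) (g : EnvHom P b c)
    (x1 x2 x3 x4 : X) (h12 : P.β x2 = P.β x1) (h34 : P.β x4 = P.β x3)
    (h23 : P.α x2 = P.α x3) (hu : P.β x4 = P.β (P.op x1 x2 x3 h12 h23)),
    f.val = mkAA P x1 x2 h12 → g.val = mkAA P x3 x4 h34 →
    (str.comp f g).val = mkAA P (P.op x1 x2 x3 h12 h23) x4 hu) ∧
  (∀ (a b c : A ⊕ B) (f : EnvHom P a b) (g : EnvHom P b c)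
    (x1 x2 x3 : X) (h12 : P.β x2 = P.β x1) (h23 : P.α x2 = P.α x3),
    f.val = mkAA P x1 x2 h12 → g.val = mkAB P x3 →
    (str.comp f g).val = mkAB P (P.op x1 x2 x3 h12 h23)) ∧
  (∀ (a b c : A ⊕ B) (f : EnvHom P a b) (g : EnvHom P b c)
    (x1 x2 : X) (h : P.β x2 = P.β x1),
    f.val = mkAB P x1 → g.val = mkBA P x2 →
    (str.comp f g).val = mkAA P x1 x2 h) ∧
  (∀ (a b c : A ⊕ B) (f : EnvHom P a b) (g : EnvHom P b c)
    (x1 x2 x3 : X) (h12 : P.β x2 = P.β x1) (h23 : P.α x2 = P.α x3),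
    f.val = mkAB P x1 → g.val = mkBB P x2 x3 h23 →
    (str.comp f g).val = mkAB P (P.op x1 x2 x3 h12 h23)) ∧
  (∀ (a b c : A ⊕ B) (f : EnvHom P a b) (g : EnvHom P b c)
    (x1 x2 x3 : X) (h12 : P.β x2 = P.β x1) (h23 : P.α x2 = P.α x3),
    f.val = mkBA P x3 → g.val = mkAA P x2 x1 h12.symm →
    (str.comp f g).val = mkBA P (P.op x1 x2 x3 h12 h23)) ∧
  (∀ (a b c : A ⊕ B) (f : EnvHom P a b) (g : EnvHom P b c)
    (x2 x3 : X) (h23 : P.α x2 = P.α x3),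
    f.val = mkBA P x2 → g.val = mkAB P x3 →
    (str.comp f g).val = mkBB P x2 x3 h23) ∧
  (∀ (a b c : A ⊕ B) (f : EnvHom P a b) (g : EnvHom P b c)
    (x1 x2 x3 : X) (h12 : P.β x2 = P.β x1) (h23 : P.α x2 = P.α x3),
    f.val = mkBB P x3 x2 h23.symm → g.val = mkBA P x1 →
    (str.comp f g).val = mkBA P (P.op x1 x2 x3 h12 h23)) ∧
  (∀ (a b c : A ⊕ B) (f : EnvHom P a b) (g : EnvHom P b c)
    (x2 x3 x4 x5 : X) (h23 : P.α x2 = P.α x3) (h43 : P.β x4 = P.β x3)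
    (h45 : P.α x4 = P.α x5) (hq : P.α x2 = P.α (P.op x3 x4 x5 h43 h45)),
    f.val = mkBB P x2 x3 h23 → g.val = mkBB P x4 x5 h45 →
    (str.comp f g).val = mkBB P x2 (P.op x3 x4 x5 h43 h45) hq) ∧
  (∀ (x : X) (a : A ⊕ B), a = Sum.inl (P.α x) →
    (str.ident a).val = mkAA P x x rfl) ∧
  (∀ (x : X) (b : A ⊕ B), b = Sum.inr (P.β x) →
    (str.ident b).val = mkBB P x x rfl)

/-!
Composition is defined on representatives by the multiplication table; the axioms G1 and G2
make every entry independent of the representatives, and U1, U2 give the identity and inverse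
laws. For associativity, every arrow is a composite of generators, `yx⁻¹ = y ∘ x⁻¹` and
`x⁻¹z = x⁻¹ ∘ z`, and if `f₁` and `f₂` associate with every composable pair to their right then
so does `f₁ ∘ f₂`. So only triples starting with a generator `x` or `x⁻¹` need checking, and each
of them is one of a few identities derived from G1, G2, U1, U2, such as
`(ab⁻¹c)d⁻¹e = ab⁻¹(cd⁻¹e)`.
-/

attribute [simp] Pregroupoid.α_op Pregroupoid.β_op Pregroupoid.U1 Pregroupoid.U2

namespace Pregroupoid

variable {A B X : Type*} (P : Pregroupoid A B X)

theorem op_congr {y y' x x' z z' : X} (hy : y = y') (hx : x = x') (hz : z = z')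
    (h1 : P.β x = P.β y) (h2 : P.α x = P.α z)
    (h1' : P.β x' = P.β y') (h2' : P.α x' = P.α z') :
    P.op y x z h1 h2 = P.op y' x' z' h1' h2' := by
  subst hy hx hz
  rfl

/-- `(ab⁻¹c)d⁻¹e = ab⁻¹(cd⁻¹e)` -/
theorem op_assoc (a b c d e : X) (hab : P.β b = P.β a) (hbc : P.α b = P.α c)
    (hdc : P.β d = P.β c) (hde : P.α d = P.α e)
    (h₁ : P.β d = P.β (P.op a b c hab hbc)) (h₂ : P.α b = P.α (P.op c d e hdc hde)) :
    P.op (P.op a b c hab hbc) d e h₁ hde = P.op a b (P.op c d e hdc hde) hab h₂ :=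
  (P.G1 _ c d e hdc hde (P.β_op _ _ _ _ _).symm (P.α_op _ _ _ _ _).symm h₁).symm.trans
    (P.G2 a b c _ hab hbc (P.β_op _ _ _ _ _).symm (P.α_op _ _ _ _ _).symm h₂)

/-- `(ab⁻¹c)d⁻¹(dc⁻¹b) = a` -/
theorem op_op_op_cancel (a b c d : X) (hab : P.β b = P.β a) (hbc : P.α b = P.α c)
    (hcd : P.β c = P.β d) (h₁ : P.β d = P.β (P.op a b c hab hbc))
    (h₂ : P.α d = P.α (P.op d c b hcd hbc.symm)) :
    P.op (P.op a b c hab hbc) d (P.op d c b hcd hbc.symm) h₁ h₂ = a := by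
  have hcb : P.op c d (P.op d c b hcd hbc.symm) hcd.symm (P.α_op _ _ _ _ _).symm = b :=
    (P.G1 c d c b hcd hbc.symm hcd.symm _ rfl).trans (P.U1 c b rfl hbc.symm)
  rw [P.op_assoc a b c d _ hab hbc hcd.symm h₂ h₁ (hbc.trans (P.α_op _ _ _ _ _).symm)]
  exact (P.op_congr rfl rfl hcb _ _ hab rfl).trans (P.U2 a b hab rfl)

/-- `p(qr⁻¹p)⁻¹z = rq⁻¹z` -/
theorem op_op_mid (q r p z : X) (hrq : P.β r = P.β q) (hrp : P.α r = P.α p)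
    (hqz : P.α q = P.α z) (h₁ : P.β (P.op q r p hrq hrp) = P.β p)
    (h₂ : P.α (P.op q r p hrq hrp) = P.α z) :
    P.op p (P.op q r p hrq hrp) z h₁ h₂ = P.op r q z hrq.symm hqz := by
  have hp : P.op r q (P.op q r p hrq hrp) hrq.symm (P.α_op _ _ _ _ _).symm = p :=
    (P.G1 r q r p hrq hrp hrq.symm _ rfl).trans (P.U1 r p rfl hrp)
  rw [← P.G2 r q (P.op q r p hrq hrp) z hrq.symm (P.α_op _ _ _ _ _).symm
    (P.β_op _ _ _ _ _).symm h₂ hqz]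
  exact P.op_congr hp.symm rfl rfl _ _ _ _

/-- `ed⁻¹(cb⁻¹a) = e(bc⁻¹d)⁻¹a` -/
theorem op_op_right_eq_op_op_mid (e d c b a : X) (hbc : P.β b = P.β c)
    (hba : P.α b = P.α a) (hcd : P.α c = P.α d) (hde : P.β d = P.β e)
    (h₁ : P.α d = P.α (P.op c b a hbc hba))
    (h₂ : P.β (P.op b c d hbc.symm hcd) = P.β e)
    (h₃ : P.α (P.op b c d hbc.symm hcd) = P.α a) :
    P.op e d (P.op c b a hbc hba) hde h₁ = P.op e (P.op b c d hbc.symm hcd) a h₂ h₃ := by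
  have hβ : P.β (P.op b c d hbc.symm hcd) = P.β d := P.β_op _ _ _ _ _
  have hb : P.op (P.op b c d hbc.symm hcd) d c hβ.symm hcd.symm = b :=
    (P.G2 b c d c hbc.symm hcd _ hcd.symm rfl).trans (P.U2 b c hbc.symm rfl)
  have hcba : P.op c b a hbc hba = P.op d (P.op b c d hbc.symm hcd) a hβ h₃ :=
    (P.op_congr rfl hb.symm rfl _ _ (P.β_op _ _ _ _ _) ((P.α_op _ _ _ _ _).trans h₃)).trans
      (P.op_op_mid _ d c a hβ.symm hcd.symm h₃ _ _)
  rw [P.op_congr rfl rfl hcba hde h₁ hde (P.α_op _ _ _ _ _).symm]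
  exact P.G1 e d _ a hβ h₃ hde _ h₂

end Pregroupoid

noncomputable section

open Classical

variable {A B X : Type*} {P : Pregroupoid A B X}

namespace XXinv

/-- `yx⁻¹ ∘ z = yx⁻¹z`, and `z` when `α x ≠ α z`. -/
def compX (c : XXinv P) (z : X) : X :=
  Quot.lift (fun p : HPair P => if h : P.α p.1.1 = P.α z then P.op p.1.2 p.1.1 z p.2 h else z)
    (by
      rintro ⟨⟨x, y⟩, hxy⟩ ⟨⟨x', y'⟩, hxy'⟩ ⟨hx, hy⟩
      dsimp only at hx hy hxy hxy' ⊢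
      subst hy
      by_cases h : P.α x = P.α z
      · simp only [dif_pos h, dif_pos (hx.symm.trans h)]
        exact (P.G2 y x x' z hxy hx _ _ h).symm
      · simp only [dif_neg h, dif_neg (fun h' => h (hx.trans h'))]) c

@[simp]
theorem compX_mk (x y z : X) (hxy : P.β x = P.β y) (h : P.α x = P.α z) :
    compX (Quot.mk _ ⟨(x, y), hxy⟩) z = P.op y x z hxy h := by
  simp only [compX]
  exact dif_pos h

theorem compX_mk_of_ne (x y z : X) (hxy : P.β x = P.β y) (h : P.α x ≠ P.α z) :
    compX (Quot.mk _ ⟨(x, y), hxy⟩) z = z := by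
  simp only [compX]
  exact dif_neg h

theorem β_compX (c : XXinv P) (z : X) : P.β (c.compX z) = P.β z := by
  induction c using Quot.ind with | _ p => ?_
  simp only [compX]
  split_ifs
  · exact P.β_op _ _ _ _ _
  · rfl

theorem compX_op (c : XXinv P) (z w u : X) (hwz : P.β w = P.β z) (hwu : P.α w = P.α u) :
    c.compX (P.op z w u hwz hwu) =
      P.op (c.compX z) w u (hwz.trans (β_compX c z).symm) hwu := by
  induction c using Quot.ind with | _ p => ?_
  obtain ⟨⟨x, y⟩, hxy⟩ := p
  by_cases h : P.α x = P.α z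
  · calc compX (Quot.mk _ ⟨(x, y), hxy⟩) (P.op z w u hwz hwu)
        = P.op y x (P.op z w u hwz hwu) hxy (h.trans (P.α_op _ _ _ _ _).symm) :=
          compX_mk _ _ _ _ _
      _ = P.op (P.op y x z hxy h) w u (hwz.trans (P.β_op _ _ _ _ _).symm) hwu :=
          (P.op_assoc _ _ _ _ _ _ _ _ _ _ _).symm
      _ = _ := P.op_congr (compX_mk x y z hxy h).symm rfl rfl _ _ _ _
  · rw [compX_mk_of_ne x y _ hxy (fun h' => h (h'.trans (P.α_op _ _ _ _ _)))]
    exact P.op_congr (compX_mk_of_ne x y z hxy h).symm rfl rfl _ _ _ _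

def comp (c d : XXinv P) : XXinv P :=
  Quot.lift
    (fun q : HPair P => Quot.mk _ ⟨(q.1.1, c.compX q.1.2), q.2.trans (β_compX c _).symm⟩)
    (by
      rintro ⟨⟨x, y⟩, hxy⟩ ⟨⟨x', y'⟩, hxy'⟩ ⟨hx, hy⟩
      dsimp only at hx hy hxy hxy' ⊢
      subst hy
      exact Quot.sound ⟨hx, compX_op c y x x' hxy hx⟩) d

def inv : XXinv P → XXinv P :=
  Quot.map (fun p => ⟨(p.1.2, p.1.1), p.2.symm⟩) (by
    rintro ⟨⟨x, y⟩, hxy⟩ ⟨⟨x', y'⟩, hxy'⟩ ⟨hx, hy⟩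
    dsimp only at hx hy hxy hxy' ⊢
    subst hy
    exact ⟨(P.α_op _ _ _ _ _).symm,
      ((P.G1 x y x x' hxy hx hxy.symm (P.α_op _ _ _ _ _).symm rfl).trans
        (P.U1 x x' rfl hx)).symm⟩)

end XXinv

namespace XinvX

/-- `x ∘ u⁻¹v = xu⁻¹v`, and `x` when `β u ≠ β x`. -/
def xComp (x : X) (d : XinvX P) : X :=
  Quot.lift (fun q : VPair P => if h : P.β q.1.1 = P.β x then P.op x q.1.1 q.1.2 h q.2 else x)
    (by
      rintro ⟨⟨u, v⟩, huv⟩ ⟨⟨u', v'⟩, huv'⟩ ⟨hu, hv⟩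
      dsimp only at hu hv huv huv' ⊢
      subst hv
      by_cases h : P.β u = P.β x
      · simp only [dif_pos h, dif_pos (hu.symm.trans h)]
        exact (P.G1 x u' u v hu huv (hu.symm.trans h) _ h).symm
      · simp only [dif_neg h, dif_neg (fun h' => h (hu.trans h'))]) d

@[simp]
theorem xComp_mk (x u v : X) (huv : P.α u = P.α v) (h : P.β u = P.β x) :
    xComp x (Quot.mk _ ⟨(u, v), huv⟩) = P.op x u v h huv := by
  simp only [xComp]
  exact dif_pos h

theorem xComp_mk_of_ne (x u v : X) (huv : P.α u = P.α v) (h : P.β u ≠ P.β x) :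
    xComp x (Quot.mk _ ⟨(u, v), huv⟩) = x := by
  simp only [xComp]
  exact dif_neg h

theorem α_xComp (x : X) (d : XinvX P) : P.α (xComp x d) = P.α x := by
  induction d using Quot.ind with | _ q => ?_
  simp only [xComp]
  split_ifs
  · exact P.α_op _ _ _ _ _
  · rfl

theorem op_xComp (z w u : X) (hwz : P.β w = P.β z) (hwu : P.α w = P.α u) (d : XinvX P) :
    xComp (P.op z w u hwz hwu) d =
      P.op z w (xComp u d) hwz (hwu.trans (α_xComp u d).symm) := by
  induction d using Quot.ind with | _ q => ?_
  obtain ⟨⟨s, t⟩, hst⟩ := q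
  by_cases h : P.β s = P.β u
  · calc xComp (P.op z w u hwz hwu) (Quot.mk _ ⟨(s, t), hst⟩)
        = P.op (P.op z w u hwz hwu) s t (h.trans (P.β_op _ _ _ _ _).symm) hst :=
          xComp_mk _ _ _ _ _
      _ = P.op z w (P.op u s t h hst) hwz (hwu.trans (P.α_op _ _ _ _ _).symm) :=
          P.op_assoc _ _ _ _ _ _ _ _ _ _ _
      _ = _ := P.op_congr rfl rfl (xComp_mk u s t hst h).symm _ _ _ _
  · rw [xComp_mk_of_ne _ s t hst (fun h' => h (h'.trans (P.β_op _ _ _ _ _)))]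
    exact P.op_congr rfl rfl (xComp_mk_of_ne u s t hst h).symm _ _ _ _

def comp (c d : XinvX P) : XinvX P :=
  Quot.lift
    (fun p : VPair P => Quot.mk _ ⟨(p.1.1, xComp p.1.2 d), p.2.trans (α_xComp _ d).symm⟩)
    (by
      rintro ⟨⟨x, z⟩, hxz⟩ ⟨⟨x', z'⟩, hxz'⟩ ⟨hx, hz⟩
      dsimp only at hx hz hxz hxz' ⊢
      subst hz
      exact Quot.sound ⟨hx, op_xComp x' x z hx hxz d⟩) c

def inv : XinvX P → XinvX P :=
  Quot.map (fun p => ⟨(p.1.2, p.1.1), p.2.symm⟩) (by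
    rintro ⟨⟨x, z⟩, hxz⟩ ⟨⟨x', z'⟩, hxz'⟩ ⟨hx, hz⟩
    dsimp only at hx hz hxz hxz' ⊢
    subst hz
    exact ⟨(P.β_op _ _ _ _ _).symm,
      ((P.G2 x' x z x hx hxz (P.β_op _ _ _ _ _).symm hxz.symm rfl).trans
        (P.U2 x' x hx rfl)).symm⟩)

end XinvX

namespace Arr

@[elab_as_elim]
theorem mk_induction {motive : Arr P → Prop}
    (aa : ∀ y x h, motive (mkAA P y x h)) (bb : ∀ x z h, motive (mkBB P x z h))
    (ab : ∀ x, motive (mkAB P x)) (ba : ∀ x, motive (mkBA P x)) (f : Arr P) : motive f := by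
  rcases f with c | c | x | x
  · induction c using Quot.ind with | _ p => exact aa p.1.2 p.1.1 p.2
  · induction c using Quot.ind with | _ p => exact bb p.1.1 p.1.2 p.2
  · exact ab x
  · exact ba x

@[simp] theorem d0_mkAA (y x : X) (h : P.β x = P.β y) : d0 P (mkAA P y x h) = .inl (P.α y) := rfl
@[simp] theorem d1_mkAA (y x : X) (h : P.β x = P.β y) : d1 P (mkAA P y x h) = .inl (P.α x) := rfl
@[simp] theorem d0_mkBB (x z : X) (h : P.α x = P.α z) : d0 P (mkBB P x z h) = .inr (P.β x) := rfl
@[simp] theorem d1_mkBB (x z : X) (h : P.α x = P.α z) : d1 P (mkBB P x z h) = .inr (P.β z) := rfl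
@[simp] theorem d0_mkAB (x : X) : d0 P (mkAB P x) = .inl (P.α x) := rfl
@[simp] theorem d1_mkAB (x : X) : d1 P (mkAB P x) = .inr (P.β x) := rfl
@[simp] theorem d0_mkBA (x : X) : d0 P (mkBA P x) = .inr (P.β x) := rfl
@[simp] theorem d1_mkBA (x : X) : d1 P (mkBA P x) = .inl (P.α x) := rfl

/-- The multiplication table, with junk values on non-composable pairs. -/
def comp : Arr P → Arr P → Arr P
  | .aa c, .aa d => .aa (c.comp d)
  | .aa c, .ab z => .ab (c.compX z)
  | .ab x, .ba y => if h : P.β y = P.β x then mkAA P x y h else .ab x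
  | .ab x, .bb d => .ab (XinvX.xComp x d)
  | .ba x, .aa c => .ba (c.inv.compX x)
  | .ba x, .ab y => if h : P.α x = P.α y then mkBB P x y h else .ba x
  | .bb c, .ba x => .ba (XinvX.xComp x c.inv)
  | .bb c, .bb d => .bb (c.comp d)
  | f, _ => f

def inv : Arr P → Arr P
  | .aa c => .aa c.inv
  | .bb c => .bb c.inv
  | .ab x => .ba x
  | .ba x => .ab x

variable (P) in
def ident : A ⊕ B → Arr P
  | .inl a => mkAA P (P.α_surj a).choose _ rfl
  | .inr b => mkBB P (P.β_surj b).choose _ rfl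

@[simp]
theorem comp_mkAA_mkAA (x1 x2 x3 x4 : X) (h12 : P.β x2 = P.β x1) (h34 : P.β x4 = P.β x3)
    (h23 : P.α x2 = P.α x3) :
    (mkAA P x1 x2 h12).comp (mkAA P x3 x4 h34) =
      mkAA P (P.op x1 x2 x3 h12 h23) x4 (h34.trans (P.β_op _ _ _ _ _).symm) :=
  congrArg Arr.aa (congrArg (Quot.mk _) (Subtype.ext (congrArg (Prod.mk x4)
    (XXinv.compX_mk x2 x1 x3 h12 h23))))

@[simp]
theorem comp_mkAA_mkAB (x1 x2 x3 : X) (h12 : P.β x2 = P.β x1) (h23 : P.α x2 = P.α x3) :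
    (mkAA P x1 x2 h12).comp (mkAB P x3) = mkAB P (P.op x1 x2 x3 h12 h23) :=
  congrArg Arr.ab (XXinv.compX_mk x2 x1 x3 h12 h23)

@[simp]
theorem comp_mkAB_mkBA (x1 x2 : X) (h : P.β x2 = P.β x1) :
    (mkAB P x1).comp (mkBA P x2) = mkAA P x1 x2 h :=
  dif_pos h

@[simp]
theorem comp_mkAB_mkBB (x1 x2 x3 : X) (h12 : P.β x2 = P.β x1) (h23 : P.α x2 = P.α x3) :
    (mkAB P x1).comp (mkBB P x2 x3 h23) = mkAB P (P.op x1 x2 x3 h12 h23) :=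
  congrArg Arr.ab (XinvX.xComp_mk x1 x2 x3 h23 h12)

@[simp]
theorem comp_mkBA_mkAA (x1 x2 x3 : X) (h12 : P.β x2 = P.β x1) (h23 : P.α x2 = P.α x3) :
    (mkBA P x3).comp (mkAA P x2 x1 h12.symm) = mkBA P (P.op x1 x2 x3 h12 h23) :=
  congrArg Arr.ba (XXinv.compX_mk x2 x1 x3 h12 h23)

@[simp]
theorem comp_mkBA_mkAB (x2 x3 : X) (h23 : P.α x2 = P.α x3) :
    (mkBA P x2).comp (mkAB P x3) = mkBB P x2 x3 h23 :=
  dif_pos h23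

@[simp]
theorem comp_mkBB_mkBA (x1 x2 x3 : X) (h12 : P.β x2 = P.β x1) (h23 : P.α x2 = P.α x3) :
    (mkBB P x3 x2 h23.symm).comp (mkBA P x1) = mkBA P (P.op x1 x2 x3 h12 h23) :=
  congrArg Arr.ba (XinvX.xComp_mk x1 x2 x3 h23 h12)

@[simp]
theorem comp_mkBB_mkBB (x2 x3 x4 x5 : X) (h23 : P.α x2 = P.α x3) (h43 : P.β x4 = P.β x3)
    (h45 : P.α x4 = P.α x5) :
    (mkBB P x2 x3 h23).comp (mkBB P x4 x5 h45) =
      mkBB P x2 (P.op x3 x4 x5 h43 h45) (h23.trans (P.α_op _ _ _ _ _).symm) :=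
  congrArg Arr.bb (congrArg (Quot.mk _) (Subtype.ext (congrArg (Prod.mk x2)
    (XinvX.xComp_mk x3 x4 x5 h45 h43))))

@[simp] theorem inv_mkAA (y x : X) (h : P.β x = P.β y) :
    (mkAA P y x h).inv = mkAA P x y h.symm := rfl
@[simp] theorem inv_mkBB (x z : X) (h : P.α x = P.α z) :
    (mkBB P x z h).inv = mkBB P z x h.symm := rfl
@[simp] theorem inv_mkAB (x : X) : (mkAB P x).inv = mkBA P x := rfl
@[simp] theorem inv_mkBA (x : X) : (mkBA P x).inv = mkAB P x := rfl

@[simp]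
theorem ident_inl (x : X) : ident P (.inl (P.α x)) = mkAA P x x rfl :=
  congrArg Arr.aa (Quot.sound
    ⟨(P.α_surj (P.α x)).choose_spec, (P.U1 _ x rfl (P.α_surj (P.α x)).choose_spec).symm⟩)

@[simp]
theorem ident_inr (x : X) : ident P (.inr (P.β x)) = mkBB P x x rfl :=
  congrArg Arr.bb (Quot.sound
    ⟨(P.β_surj (P.β x)).choose_spec, (P.U2 x _ (P.β_surj (P.β x)).choose_spec rfl).symm⟩)

theorem d0_ident (a : A ⊕ B) : d0 P (ident P a) = a := by
  rcases a with a | b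
  · exact congrArg Sum.inl (P.α_surj a).choose_spec
  · exact congrArg Sum.inr (P.β_surj b).choose_spec

theorem d1_ident (a : A ⊕ B) : d1 P (ident P a) = a := by
  rcases a with a | b
  · exact congrArg Sum.inl (P.α_surj a).choose_spec
  · exact congrArg Sum.inr (P.β_surj b).choose_spec

theorem d0_inv (f : Arr P) : d0 P f.inv = d1 P f := by
  induction f using mk_induction <;> rfl

theorem d1_inv (f : Arr P) : d1 P f.inv = d0 P f := by
  induction f using mk_induction <;> rfl

theorem d0_comp_d1_comp {f g : Arr P} (hfg : d1 P f = d0 P g) :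
    d0 P (f.comp g) = d0 P f ∧ d1 P (f.comp g) = d1 P g := by
  induction f using mk_induction <;> induction g using mk_induction <;> simp at hfg <;>
    simp_all

theorem mkAA_op_eq (a b c d : X) (hab : P.β b = P.β a) (hbc : P.α b = P.α c)
    (hcd : P.β c = P.β d) (h₁ : P.β d = P.β (P.op a b c hab hbc))
    (h₂ : P.β (P.op d c b hcd hbc.symm) = P.β a) :
    mkAA P (P.op a b c hab hbc) d h₁ = mkAA P a (P.op d c b hcd hbc.symm) h₂ :=
  congrArg Arr.aa (Quot.sound ⟨(P.α_op _ _ _ _ _).symm,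
    (P.op_op_op_cancel a b c d hab hbc hcd h₁ (P.α_op _ _ _ _ _).symm).symm⟩)

theorem mkBB_op_eq (q r p z : X) (hrq : P.β r = P.β q) (hrp : P.α r = P.α p)
    (hqz : P.α q = P.α z) (h₁ : P.α (P.op q r p hrq hrp) = P.α z)
    (h₂ : P.α p = P.α (P.op r q z hrq.symm hqz)) :
    mkBB P (P.op q r p hrq hrp) z h₁ = mkBB P p (P.op r q z hrq.symm hqz) h₂ :=
  congrArg Arr.bb (Quot.sound ⟨P.β_op _ _ _ _ _,
    (P.op_op_mid q r p z hrq hrp hqz (P.β_op _ _ _ _ _) h₁).symm⟩)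

def IsLeftAssoc (f : Arr P) : Prop :=
  ∀ g h : Arr P, d1 P f = d0 P g → d1 P g = d0 P h → (f.comp g).comp h = f.comp (g.comp h)

theorem IsLeftAssoc.comp {f₁ f₂ : Arr P} (hf₁ : IsLeftAssoc f₁) (hf₂ : IsLeftAssoc f₂)
    (h₁₂ : d1 P f₁ = d0 P f₂) : IsLeftAssoc (f₁.comp f₂) := by
  intro g h hg hh
  rw [(d0_comp_d1_comp h₁₂).2] at hg
  have h₂g := d0_comp_d1_comp hg
  have hgh := d0_comp_d1_comp hh
  rw [hf₁ f₂ g h₁₂ hg, hf₁ (f₂.comp g) h (h₁₂.trans h₂g.1.symm) (h₂g.2.trans hh),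
    hf₂ g h hg hh, hf₁ f₂ (g.comp h) h₁₂ (hg.trans hgh.1.symm)]

theorem isLeftAssoc_mkAB (x : X) : IsLeftAssoc (mkAB P x) := by
  intro g h hg hh
  induction g using mk_induction <;> induction h using mk_induction <;> simp at hg hh <;>
    simp_all
  case bb.bb => exact congrArg (mkAB P) (P.op_assoc _ _ _ _ _ _ _ _ _ _ _)
  case bb.ba => exact mkAA_op_eq _ _ _ _ _ _ _ _ _
  case ba.aa => exact mkAA_op_eq _ _ _ _ _ _ _ _ _

theorem isLeftAssoc_mkBA (x : X) : IsLeftAssoc (mkBA P x) := by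
  intro g h hg hh
  induction g using mk_induction <;> induction h using mk_induction <;> simp at hg hh <;>
    simp_all
  case aa.aa => exact congrArg (mkBA P) (P.op_op_right_eq_op_op_mid _ _ _ _ _ _ _ _ _ _ _ _)
  case aa.ab => exact mkBB_op_eq _ _ _ _ _ _ _ _ _

theorem isLeftAssoc (f : Arr P) : IsLeftAssoc f := by
  induction f using mk_induction with
  | aa y x h =>
    rw [← comp_mkAB_mkBA y x h]
    exact (isLeftAssoc_mkAB y).comp (isLeftAssoc_mkBA x) (congrArg Sum.inr h.symm)
  | bb x z h =>
    rw [← comp_mkBA_mkAB x z h]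
    exact (isLeftAssoc_mkBA x).comp (isLeftAssoc_mkAB z) (congrArg Sum.inl h)
  | ab x => exact isLeftAssoc_mkAB x
  | ba x => exact isLeftAssoc_mkBA x

theorem ident_comp (f : Arr P) : (ident P (d0 P f)).comp f = f := by
  induction f using mk_induction <;> simp

theorem comp_ident (f : Arr P) : f.comp (ident P (d1 P f)) = f := by
  induction f using mk_induction <;> simp

theorem inv_comp (f : Arr P) : f.inv.comp f = ident P (d1 P f) := by
  induction f using mk_induction <;> simp

theorem comp_inv (f : Arr P) : f.comp f.inv = ident P (d0 P f) := by
  induction f using mk_induction <;> simp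

end Arr

variable (P)

open Arr in
def envStr : GroupoidStructure (EnvHom P) where
  ident a := ⟨ident P a, d0_ident a, d1_ident a⟩
  comp f g := ⟨f.1.comp g.1, by
    obtain ⟨h0, h1⟩ := d0_comp_d1_comp (f.2.2.trans g.2.1.symm)
    exact ⟨h0.trans f.2.1, h1.trans g.2.2⟩⟩
  inv f := ⟨f.1.inv, (d0_inv f.1).trans f.2.2, (d1_inv f.1).trans f.2.1⟩
  id_comp := by
    rintro _ _ ⟨f, rfl, rfl⟩
    exact Subtype.ext (ident_comp f)
  comp_id := by
    rintro _ _ ⟨f, rfl, rfl⟩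
    exact Subtype.ext (comp_ident f)
  assoc f g h :=
    Subtype.ext (isLeftAssoc f.1 g.1 h.1 (f.2.2.trans g.2.1.symm) (g.2.2.trans h.2.1.symm))
  inv_comp := by
    rintro _ _ ⟨f, rfl, rfl⟩
    exact Subtype.ext (inv_comp f)
  comp_inv := by
    rintro _ _ ⟨f, rfl, rfl⟩
    exact Subtype.ext (comp_inv f)

theorem tableSpec_envStr : TableSpec P (envStr P) := by
  refine ⟨?_, ?_, ?_, ?_, ?_, ?_, ?_, ?_, ?_, ?_⟩ <;> intros <;> subst_vars <;>
    simp_all [envStr]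

end

/-- The enveloping groupoid `X⁺` of a pregroupoid `X` on
`A`, `B` is a well-defined groupoid: on the object set `A ⊔ B`, with hom-sets
built from `XX⁻¹`, `X⁻¹X`, `X` and `X⁻¹`, there is a groupoid structure
(composition well defined on equivalence classes, associative, with identities
`xx⁻¹` at `α x` and `x⁻¹x` at `β x`, and with every arrow invertible) whose
composition is given by the multiplication table. -/
theorem enveloping_groupoid_exists {A B X : Type*} (P : Pregroupoid A B X) :
    ∃ str : GroupoidStructure (EnvHom P), TableSpec P str :=
  ⟨envStr P, tableSpec_envStr P⟩

end Kock
end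

section
/- The associativity case BAAA holds: in any pregroupoid, (x₆x₅⁻¹(x₄x₃⁻¹x₂)) determines the same element as (x₆(x₃x₄⁻¹x₅)⁻¹x₂); hence in the enveloping groupoid, (x₂⁻¹ ∘ x₃x₄⁻¹) ∘ x₅x₆⁻¹ = x₂⁻¹ ∘ (x₃x₄⁻¹ ∘ x₅x₆⁻¹) whenever defined. -/
namespace Kock

/-!
With `w := x₃x₄⁻¹x₅` one has `x₄x₃⁻¹w = x₅`, so `x₅w⁻¹x₂ = (x₄x₃⁻¹w)w⁻¹x₂ = x₄x₃⁻¹x₂` by `G2`;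
then `x₆x₅⁻¹(x₄x₃⁻¹x₂) = x₆x₅⁻¹(x₅w⁻¹x₂) = x₆w⁻¹x₂` by `G1`.
-/

namespace Pregroupoid

variable {A B X : Type*} (P : Pregroupoid A B X)

theorem G1_of_eq {v y x z u : X} {h1 : P.β x = P.β y} (h2 : P.α x = P.α z)
    (hu : P.op y x z h1 h2 = u) (h3 : P.β y = P.β v) (h4 : P.α y = P.α u)
    (h5 : P.β x = P.β v) : P.op v y u h3 h4 = P.op v x z h5 h2 := by
  subst hu
  exact P.G1 v y x z h1 h2 h3 h4 h5

theorem G2_of_eq {y x z w u : X} {h1 : P.β x = P.β y} {h2 : P.α x = P.α z}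
    (hu : P.op y x z h1 h2 = u) (h3 : P.β z = P.β u) (h4 : P.α z = P.α w)
    (h5 : P.α x = P.α w) : P.op u z w h3 h4 = P.op y x w h1 h5 := by
  subst hu
  exact P.G2 y x z w h1 h2 h3 h4 h5

theorem op_op_cancel {y x z : X} (h1 : P.β x = P.β y) (h2 : P.α x = P.α z)
    (h3 : P.β y = P.β x) (h4 : P.α y = P.α (P.op y x z h1 h2)) :
    P.op x y (P.op y x z h1 h2) h3 h4 = z :=
  (P.G1 x y x z h1 h2 h3 h4 rfl).trans (P.U1 x z rfl h2)

end Pregroupoid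

/-- The associativity case `BAAA` for the enveloping
groupoid: `x₆x₅⁻¹(x₄x₃⁻¹x₂)` and `x₆(x₃x₄⁻¹x₅)⁻¹x₂` determine the same element
of `X`; hence, by the multiplication table of the enveloping groupoid,
`(x₂⁻¹ ∘ x₃x₄⁻¹) ∘ x₅x₆⁻¹ = x₂⁻¹ ∘ (x₃x₄⁻¹ ∘ x₅x₆⁻¹)` whenever defined, both
sides being the formal inverse of this common element. -/
theorem env_assoc_case_BAAA {A B X : Type*} (P : Pregroupoid A B X)
    (x2 x3 x4 x5 x6 : X)
    (h34 : P.β x3 = P.β x4) (h32 : P.α x3 = P.α x2) (h45 : P.α x4 = P.α x5)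
    (h56 : P.β x5 = P.β x6)
    (ha : P.α x5 = P.α (P.op x4 x3 x2 h34 h32))
    (hb : P.β (P.op x3 x4 x5 h34.symm h45) = P.β x6)
    (hc : P.α (P.op x3 x4 x5 h34.symm h45) = P.α x2) :
    P.op x6 x5 (P.op x4 x3 x2 h34 h32) h56 ha
      = P.op x6 (P.op x3 x4 x5 h34.symm h45) x2 hb hc := by
  set w := P.op x3 x4 x5 h34.symm h45
  have hw : P.op x4 x3 w h34 (P.α_op x3 x4 x5 h34.symm h45).symm = x5 :=
    P.op_op_cancel h34.symm h45 h34 _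
  have hmid : P.op x5 w x2 (P.β_op x3 x4 x5 h34.symm h45) hc = P.op x4 x3 x2 h34 h32 :=
    P.G2_of_eq hw _ hc h32
  exact P.G1_of_eq hc hmid h56 ha hb

end Kock
end

section
/- Let a groupoid G with object set A act on the left on a surjection α : X → A making X a G-torsor with orbit quotient β : X → B. Define yx⁻¹z := (yx⁻¹)·z where yx⁻¹ is the unique g ∈ G with g·x = y (for β(x)=β(y)) and α(x)=α(z). Then this ternary operation makes (A ← X → B) into a pregroupoid: it satisfies the correct book-keeping (α(yx⁻¹z)=α(y), β(yx⁻¹z)=β(z)) and the four axioms xx⁻¹z=z, yx⁻¹x=y, vy⁻¹(yx⁻¹z)=vx⁻¹z, (yx⁻¹z)z⁻¹w=yx⁻¹w. -/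
/-!
Two points `x`, `y` of a `β`-fibre are related by some arrow `g` with `g · x = y`, and
`y x⁻¹ z` is `g · z` for any such `g`. Each pregroupoid axiom is then an identity of the
action: `𝟙 · z = z`, `g · x = y`, and `g' · (g · z) = (g' ≫ g) · z`, where `g' ≫ g`
carries `x` to `v` when `g'` carries `y = g · x` to `v`.
-/
namespace Kock

open CategoryTheory in
/-- A left torsor structure: a groupoid with object type `G` acting on the left
on a surjection `α : X → G`, freely, with orbit quotient `β : X → B`
(the action groupoid is the equivalence relation of having equal `β`).
`smul g x h` is `g · x`, defined when `α x` is the codomain of `g`. -/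
structure LeftTorsor (G : Type*) [Groupoid G] (B X : Type*) where
  α : X → G
  β : X → B
  nonempty : Nonempty X
  α_surj : Function.Surjective α
  β_surj : Function.Surjective β
  smul : ∀ {a b : G}, (a ⟶ b) → ∀ x : X, α x = b → X
  α_smul : ∀ {a b : G} (g : a ⟶ b) (x : X) (h : α x = b), α (smul g x h) = a
  id_smul : ∀ (a : G) (x : X) (h : α x = a), smul (𝟙 a) x h = x
  comp_smul : ∀ {a b c : G} (g : a ⟶ b) (g' : b ⟶ c) (x : X) (h : α x = c)
      (h' : α (smul g' x h) = b), smul g (smul g' x h) h' = smul (g ≫ g') x h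
  free : ∀ {a a' b : G} (g : a ⟶ b) (g' : a' ⟶ b) (x : X) (h h' : α x = b),
      smul g x h = smul g' x h' → a = a' ∧ HEq g g'
  orbit : ∀ x y : X, β x = β y ↔
      ∃ (a b : G) (g : a ⟶ b) (h : α x = b), smul g x h = y

namespace LeftTorsor

open CategoryTheory

variable {G B X : Type*} [Groupoid G] (T : LeftTorsor G B X)

lemma β_smul {a b : G} (g : a ⟶ b) (x : X) (h : T.α x = b) :
    T.β (T.smul g x h) = T.β x :=
  ((T.orbit x _).mpr ⟨a, b, g, h, rfl⟩).symm

lemma smul_comp_of_smul_eq {a b c : G} {g : b ⟶ c} {g' : a ⟶ b} {x y v : X}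
    (hx : T.α x = c) (hy : T.α y = b) (hxy : T.smul g x hx = y)
    (hyv : T.smul g' y hy = v) : T.smul (g' ≫ g) x hx = v := by
  subst hxy
  rw [← T.comp_smul g' g x hx hy, hyv]

def IsDivision (op : (y x z : X) → T.β x = T.β y → T.α x = T.α z → X) : Prop :=
  ∀ (y x z : X) (h1 : T.β x = T.β y) (h2 : T.α x = T.α z)
    {a b : G} (g : a ⟶ b) (hx : T.α x = b), T.smul g x hx = y →
    op y x z h1 h2 = T.smul g z (h2.symm.trans hx)

namespace IsDivision

variable {T} {op : (y x z : X) → T.β x = T.β y → T.α x = T.α z → X}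

lemma α_op (hop : T.IsDivision op) (y x z : X) (h1 : T.β x = T.β y) (h2 : T.α x = T.α z) :
    T.α (op y x z h1 h2) = T.α y := by
  obtain ⟨a, b, g, hx, hxy⟩ := (T.orbit x y).mp h1
  rw [hop y x z h1 h2 g hx hxy, T.α_smul, ← hxy, T.α_smul]

lemma β_op (hop : T.IsDivision op) (y x z : X) (h1 : T.β x = T.β y) (h2 : T.α x = T.α z) :
    T.β (op y x z h1 h2) = T.β z := by
  obtain ⟨a, b, g, hx, hxy⟩ := (T.orbit x y).mp h1
  rw [hop y x z h1 h2 g hx hxy, T.β_smul]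

lemma op_self_left (hop : T.IsDivision op) (x z : X) (h1 : T.β x = T.β x)
    (h2 : T.α x = T.α z) : op x x z h1 h2 = z := by
  rw [hop x x z h1 h2 (𝟙 (T.α x)) rfl (T.id_smul _ x rfl), T.id_smul]

lemma op_self_right (hop : T.IsDivision op) (y x : X) (h1 : T.β x = T.β y)
    (h2 : T.α x = T.α x) : op y x x h1 h2 = y := by
  obtain ⟨a, b, g, hx, hxy⟩ := (T.orbit x y).mp h1
  rw [hop y x x h1 h2 g hx hxy, hxy]

lemma op_op_left (hop : T.IsDivision op) (v y x z : X) (h1 : T.β x = T.β y)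
    (h2 : T.α x = T.α z) (h3 : T.β y = T.β v) (h4 : T.α y = T.α (op y x z h1 h2))
    (h5 : T.β x = T.β v) : op v y (op y x z h1 h2) h3 h4 = op v x z h5 h2 := by
  obtain ⟨a, b, g, hx, hxy⟩ := (T.orbit x y).mp h1
  obtain ⟨a', b', g', hy, hyv⟩ := (T.orbit y v).mp h3
  obtain rfl : b' = a := by rw [← hy, ← hxy, T.α_smul]
  rw [hop v y _ h3 h4 g' hy hyv, hop v x z h5 h2 _ hx (T.smul_comp_of_smul_eq hx hy hxy hyv),
    ← T.comp_smul g' g z _ (T.α_smul g z _)]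
  congr 1
  exact hop y x z h1 h2 g hx hxy

lemma op_op_right (hop : T.IsDivision op) (y x z w : X) (h1 : T.β x = T.β y)
    (h2 : T.α x = T.α z) (h3 : T.β z = T.β (op y x z h1 h2)) (h4 : T.α z = T.α w)
    (h5 : T.α x = T.α w) : op (op y x z h1 h2) z w h3 h4 = op y x w h1 h5 := by
  obtain ⟨a, b, g, hx, hxy⟩ := (T.orbit x y).mp h1
  rw [hop _ z w h3 h4 g (h2.symm.trans hx) (hop y x z h1 h2 g hx hxy).symm,
    hop y x w h1 h5 g hx hxy]

end IsDivision

end LeftTorsor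

open CategoryTheory in
/-- For a `G`-torsor `α : X → A` with orbit quotient
`β : X → B`, the operation `yx⁻¹z := (yx⁻¹)·z`, where `yx⁻¹` is the unique
`g ∈ G` with `g·x = y`, makes `A ← X → B` a pregroupoid: it has the correct
book-keeping and satisfies the four pregroupoid axioms. -/
theorem torsor_to_pregroupoid {G B X : Type*} [Groupoid G]
    (T : LeftTorsor G B X)
    (op : (y x z : X) → T.β x = T.β y → T.α x = T.α z → X)
    (hop : ∀ (y x z : X) (h1 : T.β x = T.β y) (h2 : T.α x = T.α z)
      {a b : G} (g : a ⟶ b) (hx : T.α x = b), T.smul g x hx = y →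
      op y x z h1 h2 = T.smul g z (h2.symm.trans hx)) :
    (∀ (y x z : X) (h1 : T.β x = T.β y) (h2 : T.α x = T.α z),
      T.α (op y x z h1 h2) = T.α y) ∧
    (∀ (y x z : X) (h1 : T.β x = T.β y) (h2 : T.α x = T.α z),
      T.β (op y x z h1 h2) = T.β z) ∧
    (∀ (x z : X) (h1 : T.β x = T.β x) (h2 : T.α x = T.α z),
      op x x z h1 h2 = z) ∧
    (∀ (y x : X) (h1 : T.β x = T.β y) (h2 : T.α x = T.α x),
      op y x x h1 h2 = y) ∧
    (∀ (v y x z : X) (h1 : T.β x = T.β y) (h2 : T.α x = T.α z)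
      (h3 : T.β y = T.β v) (h4 : T.α y = T.α (op y x z h1 h2))
      (h5 : T.β x = T.β v),
      op v y (op y x z h1 h2) h3 h4 = op v x z h5 h2) ∧
    (∀ (y x z w : X) (h1 : T.β x = T.β y) (h2 : T.α x = T.α z)
      (h3 : T.β z = T.β (op y x z h1 h2)) (h4 : T.α z = T.α w)
      (h5 : T.α x = T.α w),
      op (op y x z h1 h2) z w h3 h4 = op y x w h1 h5) := by
  have hdiv : T.IsDivision op := hop
  exact ⟨hdiv.α_op, hdiv.β_op, hdiv.op_self_left, hdiv.op_self_right, hdiv.op_op_left,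
    hdiv.op_op_right⟩

end Kock
end
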